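/- arXiv:1804.04895 — 3 statements merged into one kernel-verified Lean document; each statement's English description precedes it below -/
import Mathlib

section
/- For every k ∈ ℕ and every real a ≥ √(2k+1), the one-dimensional Hermite function φ_k satisfies ∫_{|x| ≥ a} |φ_k(x)|² dx ≤ (2^{k+1} / (k! √π)) · a^{2k−1} · e^{−a²}. -/
open MeasureTheory

noncomputable section

/-- The one-dimensional Hermite functions
`φ_k(x) = ((-1)^k / √(2^k k! √π)) e^{x²/2} (d/dx)^k e^{-x²}`. -/
def hermiteFn (k : ℕ) (x : ℝ) : ℝ :=
  ((-1 : ℝ) ^ k / Real.sqrt (2 ^ k * Nat.factorial k * Real.sqrt Real.pi)) *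
    Real.exp (x ^ 2 / 2) * iteratedDeriv k (fun y => Real.exp (-(y ^ 2))) x

/-- The `n`-dimensional Hermite functions `Φ_α(x) = ∏_j φ_{α_j}(x_j)`, viewed as
complex-valued functions. -/
def hermitePhi {n : ℕ} (α : Fin n → ℕ) (x : EuclideanSpace ℝ (Fin n)) : ℂ :=
  ∏ j, (hermiteFn (α j) (x j) : ℂ)

/-- `E_N`, the span of the Hermite functions `Φ_α` with `|α| ≤ N`. -/
def hermiteSpan (n N : ℕ) : Submodule ℂ (EuclideanSpace ℝ (Fin n) → ℂ) :=
  Submodule.span ℂ {f | ∃ α : Fin n → ℕ, (∑ j, α j) ≤ N ∧ f = hermitePhi α}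

end

/-! ### Auxiliary material for the tail estimate -/

set_option maxHeartbeats 1000000

namespace HermiteTailAux

open Polynomial Set

/-- The (physicists') Hermite polynomials, defined via the Rodrigues-type recursion. -/
noncomputable def Hp : ℕ → Polynomial ℝ
  | 0 => 1
  | k+1 => C 2 * X * Hp k - derivative (Hp k)

lemma Hp_succ_def (k : ℕ) : Hp (k+1) = C 2 * X * Hp k - derivative (Hp k) := rfl

lemma Hp_derivative : ∀ k : ℕ, derivative (Hp (k+1)) = C (2*(k+1) : ℝ) * Hp k := by
  intro k
  induction k with
  | zero => simp [Hp_succ_def, show Hp 0 = 1 from rfl]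
  | succ n ih =>
    rw [Hp_succ_def (n+1)]
    simp only [derivative_sub, derivative_mul, derivative_C, derivative_X, ih]
    rw [show Hp (n+1) = C 2 * X * Hp n - derivative (Hp n) from rfl]
    push_cast
    rw [show (2*((n:ℝ)+1+1)) = 2 + 2*((n:ℝ)+1) by ring, C_add]
    ring

lemma Hp_rec (k : ℕ) : Hp (k+2) = C 2 * X * Hp (k+1) - C (2*(k+1) : ℝ) * Hp k := by
  rw [Hp_succ_def (k+1), Hp_derivative]

lemma iteratedDeriv_gaussian (k : ℕ) (x : ℝ) :
    iteratedDeriv k (fun y => Real.exp (-(y ^ 2))) x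
      = (-1:ℝ)^k * (Hp k).eval x * Real.exp (-(x^2)) := by
  induction k generalizing x with
  | zero => simp [show Hp 0 = 1 from rfl]
  | succ n ih =>
    rw [iteratedDeriv_succ]
    have hEq : iteratedDeriv n (fun y => Real.exp (-(y ^ 2)))
        = fun y => (-1:ℝ)^n * (Hp n).eval y * Real.exp (-(y^2)) := funext ih
    rw [hEq]
    have hexp : ∀ y : ℝ, HasDerivAt (fun z : ℝ => Real.exp (-(z^2)))
        (Real.exp (-(y^2)) * (-(2*y))) y := by
      intro y
      have h1 : HasDerivAt (fun z : ℝ => -(z^2)) (-(2*y)) y := by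
        exact (hasDerivAt_pow 2 y).neg.congr_deriv (by simp)
      exact h1.exp
    have hD : HasDerivAt (fun y => (-1:ℝ)^n * (Hp n).eval y * Real.exp (-(y^2)))
        ((-1:ℝ)^n * ((Hp n).derivative.eval x * Real.exp (-(x^2))
          + (Hp n).eval x * (Real.exp (-(x^2)) * (-(2*x))))) x := by
      have hp : HasDerivAt (fun y => (-1:ℝ)^n * (Hp n).eval y)
          ((-1:ℝ)^n * (Hp n).derivative.eval x) x :=
        ((Hp n).hasDerivAt x).const_mul _
      exact (hp.mul (hexp x)).congr_deriv (by ring)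
    rw [hD.deriv]
    rw [Hp_succ_def]
    simp only [eval_sub, eval_mul, eval_C, eval_X]
    ring

lemma Hp_chain (x : ℝ) (h1 : 1 ≤ x) :
    ∀ k : ℕ, 2*(k:ℝ) ≤ x^2 →
      0 < (Hp k).eval x ∧ x * (Hp k).eval x ≤ (Hp (k+1)).eval x ∧
        (Hp (k+1)).eval x ≤ 2*x*(Hp k).eval x := by
  intro k
  induction k with
  | zero =>
    intro _
    have h0 : (Hp 0).eval x = 1 := by simp [show Hp 0 = (1 : Polynomial ℝ) from rfl]
    have h1' : (Hp 1).eval x = 2*x := by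
      rw [Hp_succ_def]; simp [show Hp 0 = (1 : Polynomial ℝ) from rfl]
    rw [h0, h1']
    refine ⟨one_pos, by nlinarith, by nlinarith⟩
  | succ n ih =>
    intro h
    have hn : 2*(n:ℝ) ≤ x^2 := by push_cast at h ⊢; nlinarith
    obtain ⟨hpos, hlow, hup⟩ := ih hn
    have hpos1 : 0 < (Hp (n+1)).eval x := by nlinarith
    have hrec : (Hp (n+2)).eval x
        = 2*x*(Hp (n+1)).eval x - 2*((n:ℝ)+1)*(Hp n).eval x := by
      rw [Hp_rec]; simp only [eval_sub, eval_mul, eval_C, eval_X]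
    have hx2 : 2*((n:ℝ)+1) ≤ x^2 := by push_cast at h; nlinarith
    refine ⟨hpos1, ?_, ?_⟩
    · rw [hrec]; nlinarith
    · rw [hrec]; nlinarith

lemma Hp_eval_bound (x : ℝ) (h1 : 1 ≤ x) :
    ∀ k : ℕ, 2*(k:ℝ) ≤ x^2 → 0 < (Hp k).eval x ∧ (Hp k).eval x ≤ (2*x)^k := by
  intro k
  induction k with
  | zero => intro _; simp [show Hp 0 = (1 : Polynomial ℝ) from rfl]
  | succ n ih =>
    intro h
    have hn : 2*(n:ℝ) ≤ x^2 := by push_cast at h ⊢; nlinarith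
    obtain ⟨hpos, hb⟩ := ih hn
    obtain ⟨_, hlow, hup⟩ := Hp_chain x h1 n hn
    refine ⟨by nlinarith, ?_⟩
    calc (Hp (n+1)).eval x ≤ 2*x*(Hp n).eval x := hup
      _ ≤ 2*x*(2*x)^n := by nlinarith
      _ = (2*x)^(n+1) := by ring

lemma integrable_pow_gauss (n : ℕ) :
    Integrable fun x : ℝ => x^n * Real.exp (-(x^2)) := by
  have hg : Integrable (fun x : ℝ =>
      Real.exp (-(1:ℝ)*x^2) + (2^n * (n.factorial : ℝ)) * Real.exp (-(1/2:ℝ)*x^2)) :=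
    (integrable_exp_neg_mul_sq one_pos).add
      ((integrable_exp_neg_mul_sq (by norm_num : (0:ℝ) < 1/2)).const_mul _)
  refine hg.mono' ?_ ?_
  · exact ((continuous_pow n).mul
      (Real.continuous_exp.comp (continuous_pow 2).neg)).aestronglyMeasurable
  · filter_upwards with x
    have hexp : (0:ℝ) < Real.exp (-(x^2)) := Real.exp_pos _
    rw [Real.norm_eq_abs, abs_mul, abs_pow, abs_of_pos hexp]
    have e1 : Real.exp (-(1:ℝ)*x^2) = Real.exp (-(x^2)) := by norm_num
    have hfac : (0:ℝ) < (n.factorial : ℝ) := by positivity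
    rcases le_total (|x|) 1 with h | h
    · have hb : |x|^n ≤ 1 := pow_le_one₀ (abs_nonneg x) h
      have h2 : (0:ℝ) ≤ (2^n * (n.factorial : ℝ)) * Real.exp (-(1/2:ℝ)*x^2) := by positivity
      rw [e1]
      nlinarith
    · have hb : |x|^n ≤ (x^2)^n := by
        calc |x|^n ≤ (|x|^2)^n := by
              refine pow_le_pow_left₀ (abs_nonneg x) ?_ n
              nlinarith [abs_nonneg x]
          _ = (x^2)^n := by rw [sq_abs]
      have hb2 : (x^2/2)^n / n.factorial ≤ Real.exp (x^2/2) :=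
        Real.pow_div_factorial_le_exp (x^2/2) (by positivity) n
      have hb3 : (x^2)^n ≤ 2^n * (n.factorial : ℝ) * Real.exp (x^2/2) := by
        have hdp : (x^2/2)^n = (x^2)^n / 2^n := div_pow _ _ _
        rw [hdp] at hb2
        rw [div_div] at hb2
        have h2n : (0:ℝ) < 2^n * (n.factorial : ℝ) := by positivity
        calc (x^2)^n = ((x^2)^n / (2^n * n.factorial)) * (2^n * n.factorial) := by
              field_simp
          _ ≤ Real.exp (x^2/2) * (2^n * n.factorial) := by
              exact mul_le_mul_of_nonneg_right hb2 h2n.le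
          _ = 2^n * (n.factorial : ℝ) * Real.exp (x^2/2) := by ring
      have e2 : Real.exp (x^2/2) * Real.exp (-(x^2)) = Real.exp (-(1/2:ℝ)*x^2) := by
        rw [← Real.exp_add]; ring_nf
      have hexp2 : (0:ℝ) < Real.exp (-(1/2:ℝ)*x^2) := Real.exp_pos _
      have hkey : |x|^n * Real.exp (-(x^2))
          ≤ 2^n * (n.factorial : ℝ) * Real.exp (-(1/2:ℝ)*x^2) := by
        calc |x|^n * Real.exp (-(x^2)) ≤ (x^2)^n * Real.exp (-(x^2)) :=
              mul_le_mul_of_nonneg_right hb hexp.le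
          _ ≤ (2^n * (n.factorial : ℝ) * Real.exp (x^2/2)) * Real.exp (-(x^2)) :=
              mul_le_mul_of_nonneg_right hb3 hexp.le
          _ = 2^n * (n.factorial : ℝ) * (Real.exp (x^2/2) * Real.exp (-(x^2))) := by ring
          _ = _ := by rw [e2]
      have h4 : (0:ℝ) < Real.exp (-(1:ℝ)*x^2) := Real.exp_pos _
      nlinarith

lemma integrable_poly_gauss (p : Polynomial ℝ) :
    Integrable fun x : ℝ => p.eval x * Real.exp (-(x^2)) := by
  have hEq : (fun x : ℝ => p.eval x * Real.exp (-(x^2)))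
      = fun x : ℝ => ∑ i ∈ Finset.range (p.natDegree + 1),
          p.coeff i * (x^i * Real.exp (-(x^2))) := by
    funext x
    rw [Polynomial.eval_eq_sum_range, Finset.sum_mul]
    exact Finset.sum_congr rfl fun i _ => by ring
  rw [hEq]
  exact integrable_finset_sum _ fun i _ => (integrable_pow_gauss i).const_mul _

lemma tail_integral_le (k : ℕ) (a : ℝ) (h1 : 1 ≤ a) (hK : 2*(k:ℝ)+1 ≤ a^2) :
    ∫ x in Ioi a, x^(2*k) * Real.exp (-(x^2))
      ≤ a^(2*k)/a * Real.exp (-(a^2)) := by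
  set F : ℝ → ℝ := fun x => -(x^(2*k+1) * Real.exp (-(x^2)) / x^2) with hF
  set f' : ℝ → ℝ := fun x =>
    (2 * x^(2*k+2) - (2*(k:ℝ)-1) * x^(2*k)) / x^2 * Real.exp (-(x^2)) with hf'
  have hexp : ∀ y : ℝ, HasDerivAt (fun z : ℝ => Real.exp (-(z^2)))
      (Real.exp (-(y^2)) * (-(2*y))) y := by
    intro y
    have h1 : HasDerivAt (fun z : ℝ => -(z^2)) (-(2*y)) y := by
      exact (hasDerivAt_pow 2 y).neg.congr_deriv (by simp)
    exact h1.exp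
  have hderiv : ∀ x ∈ Ioi a, HasDerivAt F (f' x) x := by
    intro x hx
    have hx0 : x ≠ 0 := by
      have : (0:ℝ) < x := lt_of_lt_of_le (lt_of_lt_of_le one_pos h1) (le_of_lt hx)
      exact this.ne'
    have h2 : x^2 ≠ 0 := pow_ne_zero 2 hx0
    have hu : HasDerivAt (fun z : ℝ => z^(2*k+1) * Real.exp (-(z^2)))
        ((2*k+1 : ℕ) * x^(2*k) * Real.exp (-(x^2))
          + x^(2*k+1) * (Real.exp (-(x^2)) * (-(2*x)))) x := by
      have := (hasDerivAt_pow (2*k+1) x).mul (hexp x)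
      exact this.congr_deriv (by simp [Nat.add_sub_cancel])
    have hdiv := (hu.div (hasDerivAt_pow 2 x) h2).neg
    refine hdiv.congr_deriv ?_
    rw [hf']
    have hx2 : (0:ℝ) < x^2 := by positivity
    field_simp
    push_cast
    ring
  have hcont : ContinuousWithinAt F (Ici a) a := by
    have ha0 : a ≠ 0 := (lt_of_lt_of_le one_pos h1).ne'
    have : ContinuousAt F a := by
      apply ContinuousAt.neg
      exact ((((continuous_pow (2*k+1)).continuousAt).mul
        (Real.continuous_exp.continuousAt.comp (((continuous_pow 2).continuousAt).neg))).div
        ((continuous_pow 2).continuousAt) (pow_ne_zero 2 ha0))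
    exact this.continuousWithinAt
  have hint : IntegrableOn f' (Ioi a) := by
    have hdom : Integrable (fun x : ℝ => (2*(k:ℝ)+3) * (x^(2*k) * Real.exp (-(x^2)))) :=
      (integrable_pow_gauss (2*k)).const_mul _
    refine (hdom.restrict (s := Ioi a)).mono' ?_ ?_
    · apply ContinuousOn.aestronglyMeasurable ?_ measurableSet_Ioi
      intro x hx
      have hx0 : x ≠ 0 := by
        have : (0:ℝ) < x := lt_of_lt_of_le (lt_of_lt_of_le one_pos h1) (le_of_lt hx)
        exact this.ne'
      refine ContinuousAt.continuousWithinAt ?_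
      rw [hf']
      apply ContinuousAt.mul
      · apply ContinuousAt.div
        · fun_prop
        · fun_prop
        · exact pow_ne_zero 2 hx0
      · fun_prop
    · filter_upwards [ae_restrict_mem measurableSet_Ioi] with x hx
      have hx1 : (1:ℝ) ≤ x := le_trans h1 (le_of_lt hx)
      have hx0 : (0:ℝ) < x := lt_of_lt_of_le one_pos hx1
      have hx2 : (0:ℝ) < x^2 := by positivity
      have he : (0:ℝ) < Real.exp (-(x^2)) := Real.exp_pos _
      simp only [hf', Real.norm_eq_abs]
      rw [abs_mul, abs_of_pos he]
      have hpow : (0:ℝ) < x^(2*k) := by positivity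
      have key : |(2 * x^(2*k+2) - (2*(k:ℝ)-1) * x^(2*k)) / x^2| ≤ (2*(k:ℝ)+3) * x^(2*k) := by
        rw [abs_div, abs_of_pos hx2, div_le_iff₀ hx2]
        have h2k2 : x^(2*k+2) = x^(2*k) * x^2 := by ring
        have hx21 : (1:ℝ) ≤ x^2 := by nlinarith
        have hxk : x^(2*k) ≤ x^(2*k) * x^2 := by nlinarith
        rw [abs_le]
        have hk0 : (0:ℝ) ≤ (k:ℝ) := Nat.cast_nonneg k
        constructor <;> nlinarith
      calc |(2 * x^(2*k+2) - (2*(k:ℝ)-1) * x^(2*k)) / x^2| * Real.exp (-(x^2))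
          ≤ ((2*(k:ℝ)+3) * x^(2*k)) * Real.exp (-(x^2)) :=
            mul_le_mul_of_nonneg_right key he.le
        _ = (2*(k:ℝ)+3) * (x^(2*k) * Real.exp (-(x^2))) := by ring
  have htend : Filter.Tendsto F Filter.atTop (nhds 0) := by
    have hup : Filter.Tendsto (fun x : ℝ => x^(2*k+1) * Real.exp (-x)) Filter.atTop (nhds 0) :=
      Real.tendsto_pow_mul_exp_neg_atTop_nhds_zero (2*k+1)
    have hlow := hup.neg
    rw [neg_zero] at hlow
    refine tendsto_of_tendsto_of_tendsto_of_le_of_le' hlow tendsto_const_nhds ?_ ?_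
    · filter_upwards [Filter.eventually_ge_atTop (1:ℝ)] with x hx
      have hx0 : (0:ℝ) < x := lt_of_lt_of_le one_pos hx
      have h2 : Real.exp (-(x^2)) ≤ Real.exp (-x) := by
        apply Real.exp_le_exp.2; nlinarith
      have h3 : x^(2*k+1) * Real.exp (-(x^2)) / x^2 ≤ x^(2*k+1) * Real.exp (-x) := by
        rw [div_le_iff₀ (by positivity)]
        have hnn : (0:ℝ) ≤ x^(2*k+1) := by positivity
        have s1 : x^(2*k+1) * Real.exp (-(x^2)) ≤ x^(2*k+1) * Real.exp (-x) :=
          mul_le_mul_of_nonneg_left h2 hnn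
        have hx21 : (1:ℝ) ≤ x^2 := by nlinarith
        have ht : (0:ℝ) ≤ x^(2*k+1) * Real.exp (-x) := mul_nonneg hnn (Real.exp_pos (-x)).le
        have s2 : x^(2*k+1) * Real.exp (-x) ≤ x^(2*k+1) * Real.exp (-x) * x^2 := by
          nlinarith [ht, hx21]
        linarith
      simp only [hF, neg_le_neg_iff]
      exact h3
    · filter_upwards [Filter.eventually_ge_atTop (1:ℝ)] with x hx
      have hx0 : (0:ℝ) < x := lt_of_lt_of_le one_pos hx
      simp only [hF, neg_nonpos, neg_le]
      have : (0:ℝ) ≤ x^(2*k+1) * Real.exp (-(x^2)) / x^2 := by positivity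
      linarith
  have hFTC := integral_Ioi_of_hasDerivAt_of_tendsto hcont hderiv hint htend
  have hFa : 0 - F a = a^(2*k)/a * Real.exp (-(a^2)) := by
    have ha0 : a ≠ 0 := (lt_of_lt_of_le one_pos h1).ne'
    rw [hF]
    field_simp
    ring
  rw [hFa] at hFTC
  rw [← hFTC]
  apply setIntegral_mono_on ((integrable_pow_gauss (2*k)).restrict) hint measurableSet_Ioi
  intro x hx
  have hx1 : (1:ℝ) ≤ x := le_trans h1 (le_of_lt hx)
  have hx0 : (0:ℝ) < x := lt_of_lt_of_le one_pos hx1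
  have hx2 : (0:ℝ) < x^2 := by positivity
  have he : (0:ℝ) < Real.exp (-(x^2)) := Real.exp_pos _
  have hxa : a^2 ≤ x^2 := by nlinarith [le_of_lt (mem_Ioi.1 hx)]
  have hKx : 2*(k:ℝ)+1 ≤ x^2 := le_trans hK hxa
  rw [hf']
  apply mul_le_mul_of_nonneg_right _ he.le
  rw [le_div_iff₀ hx2]
  have hpow : (0:ℝ) < x^(2*k) := by positivity
  have h2k2 : x^(2*k+2) = x^(2*k) * x^2 := by ring
  nlinarith

lemma hermiteFn_sq (k : ℕ) (x : ℝ) :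
    hermiteFn k x ^ 2 = (Hp k).eval x ^ 2 * Real.exp (-(x^2))
      / (2 ^ k * (Nat.factorial k : ℝ) * Real.sqrt Real.pi) := by
  have hpi : (0:ℝ) < Real.sqrt Real.pi := Real.sqrt_pos.2 Real.pi_pos
  have hD : (0:ℝ) < 2 ^ k * (Nat.factorial k : ℝ) * Real.sqrt Real.pi := by positivity
  have hs : Real.sqrt (2 ^ k * (Nat.factorial k : ℝ) * Real.sqrt Real.pi) ^ 2
      = 2 ^ k * (Nat.factorial k : ℝ) * Real.sqrt Real.pi := Real.sq_sqrt hD.le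
  have hneg : ((-1:ℝ)^k)^2 = 1 := by
    rw [← pow_mul, mul_comm, pow_mul]; norm_num
  have hexp : Real.exp (x^2/2)^2 * Real.exp (-(x^2))^2 = Real.exp (-(x^2)) := by
    rw [show Real.exp (x^2/2)^2 = Real.exp (x^2/2) * Real.exp (x^2/2) from pow_two _,
        show Real.exp (-(x^2))^2 = Real.exp (-(x^2)) * Real.exp (-(x^2)) from pow_two _,
        ← Real.exp_add, ← Real.exp_add, ← Real.exp_add]
    congr 1
    ring
  have expand : hermiteFn k x ^ 2
      = ((-1:ℝ)^k)^2 * ((-1:ℝ)^k)^2 * (Hp k).eval x ^ 2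
        * (Real.exp (x^2/2)^2 * Real.exp (-(x^2))^2)
        / Real.sqrt (2 ^ k * (Nat.factorial k : ℝ) * Real.sqrt Real.pi) ^ 2 := by
    rw [hermiteFn, iteratedDeriv_gaussian]
    push_cast
    ring
  rw [expand, hs, hneg, hexp]
  ring

lemma hermiteFn_sq_even (k : ℕ) (x : ℝ) :
    hermiteFn k (-x) ^ 2 = hermiteFn k x ^ 2 := by
  have h := iteratedDeriv_comp_neg k (fun y : ℝ => Real.exp (-(y ^ 2))) x
  simp only [neg_sq, smul_eq_mul] at h
  -- h : iteratedDeriv k f x = (-1)^k * iteratedDeriv k f (-x)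
  have hneg : ((-1:ℝ)^k)^2 = 1 := by
    rw [← pow_mul, mul_comm, pow_mul]; norm_num
  simp only [hermiteFn, neg_sq]
  rw [h]
  have : ∀ c e I : ℝ, (c * e * ((-1:ℝ)^k * I))^2 = ((-1:ℝ)^k)^2 * (c * e * I)^2 :=
    fun c e I => by ring
  rw [this, hneg, one_mul]

end HermiteTailAux

open HermiteTailAux Set

/-- **Tail estimate for one-dimensional Hermite functions.** For every `k ∈ ℕ` and every
`a ≥ √(2k+1)`, `∫_{|x| ≥ a} |φ_k(x)|² dx ≤ (2^{k+1} / (k! √π)) a^{2k-1} e^{-a²}`. -/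
theorem hermite_tail_estimate (k : ℕ) (a : ℝ) (ha : Real.sqrt (2 * k + 1) ≤ a) :
    (∫ x in {x : ℝ | a ≤ |x|}, (hermiteFn k x) ^ 2) ≤
      2 ^ (k + 1) / (Nat.factorial k * Real.sqrt Real.pi) *
        a ^ (2 * (k : ℤ) - 1) * Real.exp (-a ^ 2) := by
  have hpi : (0:ℝ) < Real.sqrt Real.pi := Real.sqrt_pos.2 Real.pi_pos
  set D : ℝ := 2 ^ k * (Nat.factorial k : ℝ) * Real.sqrt Real.pi with hDdef
  have hD : (0:ℝ) < D := by positivity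
  have h1 : (1:ℝ) ≤ a := by
    calc (1:ℝ) = Real.sqrt 1 := Real.sqrt_one.symm
      _ ≤ Real.sqrt (2 * k + 1) := Real.sqrt_le_sqrt
            (by linarith [show (0:ℝ) ≤ (k:ℝ) from Nat.cast_nonneg k])
      _ ≤ a := ha
  have ha0 : (0:ℝ) < a := lt_of_lt_of_le one_pos h1
  have hK : 2*(k:ℝ)+1 ≤ a^2 := by
    have h := Real.sq_sqrt (show (0:ℝ) ≤ 2 * k + 1 by positivity)
    calc 2*(k:ℝ)+1 = Real.sqrt (2 * k + 1) ^ 2 := by rw [h]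
      _ ≤ a^2 := pow_le_pow_left₀ (Real.sqrt_nonneg _) ha 2
  -- integrability of the squared Hermite function
  have hgeq : (fun x : ℝ => hermiteFn k x ^ 2)
      = fun x => ((Hp k)^2).eval x * Real.exp (-(x^2)) / D := by
    funext x
    rw [hermiteFn_sq, Polynomial.eval_pow, hDdef]
  have hint : Integrable (fun x : ℝ => hermiteFn k x ^ 2) := by
    have h3 : (fun x : ℝ => hermiteFn k x ^ 2)
        = fun x : ℝ => Polynomial.eval x ((Hp k)^2) * Real.exp (-(x^2)) * D⁻¹ := by
      funext x
      rw [hermiteFn_sq, Polynomial.eval_pow, div_eq_mul_inv, hDdef]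
    rw [h3]
    exact (integrable_poly_gauss _).mul_const _
  -- split the integral
  have hset : {x : ℝ | a ≤ |x|} = Iic (-a) ∪ Ici a := by
    ext x
    simp only [mem_setOf_eq, mem_union, mem_Iic, mem_Ici, le_abs, le_neg]
    tauto
  have hsplit : (∫ x in {x : ℝ | a ≤ |x|}, hermiteFn k x ^ 2)
      = (∫ x in Iic (-a), hermiteFn k x ^ 2) + ∫ x in Ici a, hermiteFn k x ^ 2 := by
    rw [hset]
    refine setIntegral_union ?_ measurableSet_Ici hint.integrableOn hint.integrableOn
    rw [Set.disjoint_left]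
    intro x hx hx'
    simp only [mem_Iic, mem_Ici] at hx hx'
    linarith
  have hneg : (∫ x in Iic (-a), hermiteFn k x ^ 2) = ∫ x in Ioi a, hermiteFn k x ^ 2 := by
    have h := integral_comp_neg_Iic (-a) (fun x => hermiteFn k x ^ 2)
    simp only [neg_neg, hermiteFn_sq_even] at h
    exact h
  have hIci : (∫ x in Ici a, hermiteFn k x ^ 2) = ∫ x in Ioi a, hermiteFn k x ^ 2 :=
    integral_Ici_eq_integral_Ioi
  -- pointwise bound on the half-line
  have hmono : (∫ x in Ioi a, hermiteFn k x ^ 2)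
      ≤ ∫ x in Ioi a, 4^k / D * (x^(2*k) * Real.exp (-(x^2))) := by
    apply setIntegral_mono_on hint.integrableOn
      (((integrable_pow_gauss (2*k)).const_mul _).integrableOn) measurableSet_Ioi
    intro x hx
    have hx1 : (1:ℝ) ≤ x := le_trans h1 (le_of_lt hx)
    have hxa : a^2 ≤ x^2 := by nlinarith [le_of_lt (mem_Ioi.1 hx)]
    have hx2 : 2*(k:ℝ) ≤ x^2 := by nlinarith
    obtain ⟨hpos, hb⟩ := Hp_eval_bound x hx1 k hx2
    have hp2 : ((2*x)^k)^2 = 4^k * x^(2*k) := by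
      calc ((2*x)^k)^2 = (2^k * x^k)^2 := by rw [mul_pow]
        _ = (2^k)^2 * (x^k)^2 := by rw [mul_pow]
        _ = 4^k * x^(2*k) := by
            rw [← pow_mul, ← pow_mul, mul_comm k 2, pow_mul, pow_mul]
            norm_num
    have key : (Hp k).eval x ^ 2 ≤ 4^k * x^(2*k) := by
      rw [← hp2]
      exact pow_le_pow_left₀ hpos.le hb 2
    rw [hermiteFn_sq]
    rw [← hDdef]
    have he : (0:ℝ) < Real.exp (-(x^2)) := Real.exp_pos _
    calc (Hp k).eval x ^ 2 * Real.exp (-(x^2)) / D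
        ≤ (4^k * x^(2*k)) * Real.exp (-(x^2)) / D := by gcongr
      _ = 4^k / D * (x^(2*k) * Real.exp (-(x^2))) := by ring
  have hconst : (∫ x in Ioi a, 4^k / D * (x^(2*k) * Real.exp (-(x^2))))
      = 4^k / D * ∫ x in Ioi a, x^(2*k) * Real.exp (-(x^2)) :=
integral_const_mul _ _
  have htail := tail_integral_le k a h1 hK
  -- final computation
  have hzpow : a ^ (2 * (k : ℤ) - 1) = a^(2*k)/a := by
    rw [zpow_sub₀ ha0.ne', zpow_one, show (2 * (k : ℤ)) = ((2*k : ℕ) : ℤ) by omega,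
      zpow_natCast]
  have hRHS : 2 ^ (k + 1) / (Nat.factorial k * Real.sqrt Real.pi) *
        a ^ (2 * (k : ℤ) - 1) * Real.exp (-a ^ 2)
      = 2 * (4^k / D * (a^(2*k)/a * Real.exp (-(a^2)))) := by
    rw [hzpow, hDdef]
    have hfac : (0:ℝ) < (Nat.factorial k : ℝ) := by positivity
    have h4 : (4:ℝ)^k = 2^k * 2^k := by rw [← mul_pow]; norm_num
    rw [h4]
    have hexp : Real.exp (-a^2) = Real.exp (-(a^2)) := by ring_nf
    rw [hexp]
    field_simp
    ring
  rw [hsplit, hneg, hIci, hRHS]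
  have hstep : (∫ x in Ioi a, hermiteFn k x ^ 2)
      ≤ 4^k / D * (a^(2*k)/a * Real.exp (-(a^2))) := by
    calc (∫ x in Ioi a, hermiteFn k x ^ 2)
        ≤ ∫ x in Ioi a, 4^k / D * (x^(2*k) * Real.exp (-(x^2))) := hmono
      _ = 4^k / D * ∫ x in Ioi a, x^(2*k) * Real.exp (-(x^2)) := hconst
      _ ≤ 4^k / D * (a^(2*k)/a * Real.exp (-(a^2))) := by
          apply mul_le_mul_of_nonneg_left htail
          positivity
  linarith
end

section
/- For every k ∈ ℕ and every real x with |x| ≥ √(2k+1), the k-th physicists' Hermite polynomial satisfies |H_k(x)| ≤ 2^k |x|^k. -/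
noncomputable section

/-- The `k`-th physicists' Hermite polynomial, as a function:
`H_k(x) = (-1)^k e^{x²} (d/dx)^k (e^{-x²})`. -/
def hermitePoly (k : ℕ) (x : ℝ) : ℝ :=
  (-1 : ℝ) ^ k * Real.exp (x ^ 2) * iteratedDeriv k (fun y => Real.exp (-(y ^ 2))) x

end

/-!
Rescaling the Gaussian turns `H_k(x)` into `√2^k He_k(√2 x)`, where `He_k = Polynomial.hermite k`
is the probabilists' Hermite polynomial. From `He_{n+2} = y He_{n+1} - (n+1) He_n`, an induction
shows that for `y ≥ 0` with `y² ≥ 4n` one has `He_n(y) ≥ 0` and `y He_n(y) / 2 ≤ He_{n+1}(y) ≤ y He_n(y)`;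
hence `0 ≤ He_k(y) ≤ y^k`, and parity of `He_k` handles `y < 0`.
-/

open Polynomial

namespace Polynomial

theorem derivative_hermite_succ (n : ℕ) :
    derivative (hermite (n + 1)) = (n + 1 : ℤ[X]) * hermite n := by
  induction n with
  | zero => simp [hermite_zero]
  | succ n ih =>
    rw [hermite_succ (n + 1), derivative_sub, derivative_mul, derivative_X, ih,
      derivative_mul, hermite_succ n]
    simp only [derivative_add, derivative_natCast, derivative_one, Nat.cast_add, Nat.cast_one]
    ring

theorem hermite_succ_succ (n : ℕ) :
    hermite (n + 2) = X * hermite (n + 1) - (n + 1 : ℤ[X]) * hermite n := by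
  rw [hermite_succ (n + 1), derivative_hermite_succ]

section CommRing

variable {R : Type*} [CommRing R]

theorem aeval_hermite_succ_succ (n : ℕ) (y : R) :
    aeval y (hermite (n + 2)) = y * aeval y (hermite (n + 1)) - (n + 1) * aeval y (hermite n) := by
  rw [hermite_succ_succ]
  simp

theorem aeval_neg_hermite (n : ℕ) (y : R) :
    aeval (-y) (hermite n) = (-1) ^ n * aeval y (hermite n) := by
  induction n using Nat.twoStepInduction with
  | zero => simp [hermite_zero]
  | one => simp only [hermite_one, aeval_X]; ring
  | more n ih₀ ih₁ =>
    rw [aeval_hermite_succ_succ, aeval_hermite_succ_succ, ih₀, ih₁]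
    ring

end CommRing

theorem aeval_hermite_nonneg_and_ratio_bounds {n : ℕ} {y : ℝ} (hy : 0 ≤ y) (h : 4 * n ≤ y ^ 2) :
    0 ≤ aeval y (hermite n) ∧ y * aeval y (hermite n) ≤ 2 * aeval y (hermite (n + 1)) ∧
      aeval y (hermite (n + 1)) ≤ y * aeval y (hermite n) := by
  induction n with
  | zero =>
    simp only [hermite_zero, zero_add, hermite_one, map_one, aeval_X, mul_one]
    exact ⟨zero_le_one, by linarith, le_rfl⟩
  | succ n ih =>
    obtain ⟨ha, hab, -⟩ := ih (by push_cast at h; linarith)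
    set a := aeval y (hermite n)
    set b := aeval y (hermite (n + 1))
    have hb : 0 ≤ b := by nlinarith [mul_nonneg hy ha]
    have hab' : 4 * (n + 1) * a ≤ 2 * y * b := by
      push_cast at h
      nlinarith [mul_le_mul_of_nonneg_left hab hy]
    rw [aeval_hermite_succ_succ]
    refine ⟨hb, by linarith, ?_⟩
    nlinarith [mul_nonneg (n.cast_add_one_pos (α := ℝ)).le ha]

theorem aeval_hermite_le_pow {n : ℕ} {y : ℝ} (hy : 0 ≤ y) (h : 4 * n ≤ y ^ 2) :
    aeval y (hermite n) ≤ y ^ n := by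
  induction n with
  | zero => simp [hermite_zero]
  | succ n ih =>
    have h' : 4 * (n : ℝ) ≤ y ^ 2 := by push_cast at h; linarith
    calc aeval y (hermite (n + 1)) ≤ y * aeval y (hermite n) :=
          (aeval_hermite_nonneg_and_ratio_bounds hy h').2.2
      _ ≤ y * y ^ n := mul_le_mul_of_nonneg_left (ih h') hy
      _ = y ^ (n + 1) := (pow_succ' y n).symm

theorem abs_aeval_hermite_abs (n : ℕ) (y : ℝ) :
    |aeval |y| (hermite n)| = |aeval y (hermite n)| := by
  rcases abs_choice y with hy | hy <;> rw [hy]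
  rw [aeval_neg_hermite, abs_mul, abs_pow, abs_neg, abs_one, one_pow, one_mul]

theorem abs_aeval_hermite_le_abs_pow {n : ℕ} {y : ℝ} (h : 4 * n ≤ y ^ 2) :
    |aeval y (hermite n)| ≤ |y| ^ n := by
  rw [← sq_abs] at h
  rw [← abs_aeval_hermite_abs,
    abs_of_nonneg (aeval_hermite_nonneg_and_ratio_bounds (abs_nonneg y) h).1]
  exact aeval_hermite_le_pow (abs_nonneg y) h

end Polynomial

theorem hermitePoly_eq_sqrt_two_pow_mul_aeval_hermite (k : ℕ) (x : ℝ) :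
    hermitePoly k x = √2 ^ k * aeval (√2 * x) (hermite k) := by
  have hs : √2 ^ 2 = 2 := Real.sq_sqrt zero_le_two
  have hgauss : (fun y : ℝ => Real.exp (-y ^ 2)) = fun y => Real.exp (-((√2 * y) ^ 2 / 2)) := by
    funext y
    rw [mul_pow, hs]
    ring_nf
  rw [hermitePoly, hgauss, iteratedDeriv_comp_const_mul (f := fun y => Real.exp (-(y ^ 2 / 2)))
    (by fun_prop), hermite_eq_deriv_gaussian', iteratedDeriv_eq_iterate, mul_pow, hs]
  ring_nf

/-- **Bound for Hermite polynomials beyond their largest root.** For every `k ∈ ℕ` and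
every `x ∈ ℝ` with `|x| ≥ √(2k+1)`, one has `|H_k(x)| ≤ 2^k |x|^k`. -/
theorem hermite_poly_bound (k : ℕ) (x : ℝ) (hx : Real.sqrt (2 * k + 1) ≤ |x|) :
    |hermitePoly k x| ≤ 2 ^ k * |x| ^ k := by
  have hs : √2 ^ 2 = 2 := Real.sq_sqrt zero_le_two
  rw [← Real.sqrt_sq_eq_abs, Real.sqrt_le_sqrt_iff (sq_nonneg x)] at hx
  have hy : 4 * (k : ℝ) ≤ (√2 * x) ^ 2 := by rw [mul_pow, hs]; linarith
  rw [hermitePoly_eq_sqrt_two_pow_mul_aeval_hermite, abs_mul, abs_pow,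
    abs_of_nonneg (Real.sqrt_nonneg 2)]
  calc √2 ^ k * |aeval (√2 * x) (hermite k)| ≤ √2 ^ k * |√2 * x| ^ k := by
        gcongr
        exact abs_aeval_hermite_le_abs_pow hy
    _ = 2 ^ k * |x| ^ k := by
        rw [abs_mul, abs_of_nonneg (Real.sqrt_nonneg 2), mul_pow, ← mul_assoc, ← mul_pow,
          Real.mul_self_sqrt zero_le_two]
end

section
/- For every k ∈ ℕ and every real x with |x| ≥ √(2k+1), the one-dimensional Hermite function satisfies |φ_k(x)| ≤ (2^{k/2} / (√(k!) · π^{1/4})) · |x|^k · e^{−x²/2}. -/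
open MeasureTheory

open Polynomial

noncomputable def He (k : ℕ) (y : ℝ) : ℝ := Polynomial.aeval y (Polynomial.hermite k)

lemma He_zero (y : ℝ) : He 0 y = 1 := by simp [He, Polynomial.hermite_zero]

lemma He_one (y : ℝ) : He 1 y = y := by simp [He, Polynomial.hermite_one]

lemma derivHermite : ∀ n : ℕ, derivative (hermite n) = (n : ℤ) • hermite (n - 1)
  | 0 => by simp [hermite_zero]
  | 1 => by simp [hermite_one, hermite_zero]
  | (n + 2) => by
    have ih1 := derivHermite (n + 1)
    have ih0 := derivHermite n
    simp only [Nat.add_sub_cancel] at ih1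
    simp only [show n + 2 - 1 = n + 1 from rfl]
    rw [hermite_succ (n + 1), derivative_sub, derivative_mul, derivative_X, one_mul, ih1,
      derivative_smul, hermite_succ n]
    simp only [ih0]
    simp only [zsmul_eq_mul]
    push_cast
    ring

lemma He_rec (n : ℕ) (y : ℝ) :
    He (n + 2) y = y * He (n + 1) y - ((n : ℝ) + 1) * He n y := by
  have hd := derivHermite (n + 1)
  simp only [Nat.add_sub_cancel] at hd
  unfold He
  rw [hermite_succ (n + 1), map_sub, map_mul, aeval_X, hd, map_zsmul]
  simp only [zsmul_eq_mul]
  push_cast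
  ring

lemma iter_deriv_gauss (k : ℕ) : ∀ x : ℝ,
    iteratedDeriv k (fun y => Real.exp (-(y ^ 2))) x
      = (-1 : ℝ) ^ k * Real.sqrt 2 ^ k * He k (Real.sqrt 2 * x) * Real.exp (-(x ^ 2)) := by
  induction k with
  | zero => intro x; simp [He_zero]
  | succ k ih =>
    intro x
    rw [iteratedDeriv_succ, funext ih]
    have hP : HasDerivAt (fun x : ℝ => He k (Real.sqrt 2 * x))
        (Polynomial.aeval (Real.sqrt 2 * x) (derivative (hermite k)) * (Real.sqrt 2 * 1)) x := by
      have h1 := ((Polynomial.hasDerivAt_aeval (q := hermite k) (Real.sqrt 2 * x)).comp x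
          ((hasDerivAt_id x).const_mul (Real.sqrt 2)))
      simpa [He, Function.comp_def] using h1
    have hE : HasDerivAt (fun x : ℝ => Real.exp (-(x ^ 2)))
        (Real.exp (-(x ^ 2)) * (-(2 * x))) x := by
      simpa using ((hasDerivAt_pow 2 x).neg).exp
    have hprod := ((hP.const_mul ((-1 : ℝ) ^ k * Real.sqrt 2 ^ k)).mul hE)
    have heq : (fun x : ℝ => (-1 : ℝ) ^ k * Real.sqrt 2 ^ k * He k (Real.sqrt 2 * x)
        * Real.exp (-(x ^ 2)))
        = fun x : ℝ => ((-1 : ℝ) ^ k * Real.sqrt 2 ^ k * He k (Real.sqrt 2 * x))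
        * Real.exp (-(x ^ 2)) := rfl
    have hd : deriv (fun x : ℝ => ((-1 : ℝ) ^ k * Real.sqrt 2 ^ k * He k (Real.sqrt 2 * x))
        * Real.exp (-(x ^ 2))) x = _ := hprod.deriv
    rw [heq, hd]
    have hHe : He (k + 1) (Real.sqrt 2 * x)
        = (Real.sqrt 2 * x) * He k (Real.sqrt 2 * x)
          - Polynomial.aeval (Real.sqrt 2 * x) (derivative (hermite k)) := by
      unfold He
      rw [hermite_succ k, map_sub, map_mul, aeval_X]
    have h2 : Real.sqrt 2 * Real.sqrt 2 = 2 := Real.mul_self_sqrt (by norm_num)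
    rw [hHe]
    linear_combination ((-1 : ℝ) ^ k * Real.sqrt 2 ^ k * x * He k (Real.sqrt 2 * x)
      * Real.exp (-(x ^ 2))) * h2

lemma He_bounds (k : ℕ) : ∀ y : ℝ, 0 ≤ y → 4 * (k : ℝ) + 2 ≤ y ^ 2 →
    0 ≤ He k y ∧ y * He k y ≤ 2 * He (k + 1) y ∧ He k y ≤ y ^ k ∧ He (k + 1) y ≤ y ^ (k + 1) := by
  induction k with
  | zero =>
    intro y hy0 _
    simp only [zero_add, He_zero, He_one, pow_zero, pow_one]
    refine ⟨zero_le_one, by linarith, le_rfl, le_rfl⟩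
  | succ k ih =>
    intro y hy0 hy
    have hk0 : (0 : ℝ) ≤ (k : ℝ) := Nat.cast_nonneg k
    obtain ⟨h0, h1, h2, h3⟩ := ih y hy0 (by push_cast at hy ⊢; nlinarith)
    push_cast at hy
    have hy1 : 0 < y := by nlinarith
    have hrec : He (k + 2) y = y * He (k + 1) y - ((k : ℝ) + 1) * He k y := He_rec k y
    have h0' : 0 ≤ He (k + 1) y := by nlinarith
    refine ⟨h0', ?_, h3, ?_⟩
    · -- y * He (k+1) ≤ 2 * He (k+2)
      have hmul : y * (y * He k y) ≤ y * (2 * He (k + 1) y) :=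
        mul_le_mul_of_nonneg_left h1 hy0
      have hykk : (4 * (k : ℝ) + 4) * He k y ≤ y ^ 2 * He k y := by nlinarith
      rw [hrec]
      nlinarith
    · rw [hrec]
      have : He (k + 2) y ≤ y * He (k + 1) y := by rw [hrec]; nlinarith
      calc y * He (k + 1) y - ((k : ℝ) + 1) * He k y ≤ y * He (k + 1) y := by nlinarith
        _ ≤ y * y ^ (k + 1) := mul_le_mul_of_nonneg_left h3 hy0
        _ = y ^ (k + 2) := by ring


lemma hermiteFn_bound_nonneg (k : ℕ) (x : ℝ) (hx0 : 0 ≤ x) (hx : Real.sqrt (2 * k + 1) ≤ x) :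
    |hermiteFn k x| ≤
      (2 : ℝ) ^ ((k : ℝ) / 2) / (Real.sqrt (Nat.factorial k) * Real.pi ^ ((1 : ℝ) / 4)) *
        x ^ k * Real.exp (-x ^ 2 / 2) := by
  have hx2 : 2 * (k : ℝ) + 1 ≤ x ^ 2 := by
    nlinarith [Real.sq_sqrt (show (0:ℝ) ≤ 2 * (k:ℝ) + 1 by positivity),
      Real.sqrt_nonneg (2 * (k:ℝ) + 1), hx]
  have h2 : Real.sqrt 2 * Real.sqrt 2 = 2 := Real.mul_self_sqrt (by norm_num)
  set y := Real.sqrt 2 * x with hy_def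
  have hy0 : 0 ≤ y := mul_nonneg (Real.sqrt_nonneg 2) hx0
  have hy : 4 * (k : ℝ) + 2 ≤ y ^ 2 := by
    have : y ^ 2 = 2 * x ^ 2 := by rw [hy_def]; nlinarith [h2]
    rw [this]; nlinarith
  obtain ⟨h0, -, hup, -⟩ := He_bounds k y hy0 hy
  set S := Real.sqrt (2 ^ k * (Nat.factorial k : ℝ) * Real.sqrt Real.pi) with hS_def
  have hS0 : 0 < S := by
    rw [hS_def]
    apply Real.sqrt_pos.2
    have := Real.sqrt_pos.2 Real.pi_pos
    positivity
  have hsq : ((-1 : ℝ)) ^ k * ((-1 : ℝ)) ^ k = 1 := by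
    rw [← pow_add]
    exact Even.neg_one_pow ⟨k, by ring⟩
  have hE : Real.exp (x ^ 2 / 2) * Real.exp (-(x ^ 2)) = Real.exp (-x ^ 2 / 2) := by
    rw [← Real.exp_add]; congr 1; ring
  have key : hermiteFn k x = Real.sqrt 2 ^ k / S * He k y * Real.exp (-x ^ 2 / 2) := by
    unfold hermiteFn
    rw [iter_deriv_gauss k x, ← hS_def, ← hy_def,
      show ((-1:ℝ) ^ k / S) * Real.exp (x ^ 2 / 2) *
        ((-1:ℝ) ^ k * Real.sqrt 2 ^ k * He k y * Real.exp (-(x ^ 2)))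
        = (((-1:ℝ) ^ k * (-1:ℝ) ^ k) * (Real.sqrt 2 ^ k / S * He k y)) *
          (Real.exp (x ^ 2 / 2) * Real.exp (-(x ^ 2))) by ring, hsq, hE]
    ring
  have habs : |hermiteFn k x| = Real.sqrt 2 ^ k / S * He k y * Real.exp (-x ^ 2 / 2) := by
    rw [key, abs_of_nonneg]
    have : (0:ℝ) ≤ Real.sqrt 2 ^ k / S := by positivity
    positivity
  rw [habs]
  have hHe_le : He k y ≤ Real.sqrt 2 ^ k * x ^ k := by
    calc He k y ≤ y ^ k := hup
      _ = Real.sqrt 2 ^ k * x ^ k := by rw [hy_def, mul_pow]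
  have hstep : Real.sqrt 2 ^ k / S * He k y * Real.exp (-x ^ 2 / 2)
      ≤ (2 : ℝ) ^ k / S * x ^ k * Real.exp (-x ^ 2 / 2) := by
    have h2k : Real.sqrt 2 ^ k * Real.sqrt 2 ^ k = 2 ^ k := by
      rw [← mul_pow, h2]
    have := mul_le_mul_of_nonneg_left hHe_le
      (show (0:ℝ) ≤ Real.sqrt 2 ^ k / S by positivity)
    have hEx : (0:ℝ) ≤ Real.exp (-x ^ 2 / 2) := (Real.exp_pos _).le
    calc Real.sqrt 2 ^ k / S * He k y * Real.exp (-x ^ 2 / 2)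
        ≤ Real.sqrt 2 ^ k / S * (Real.sqrt 2 ^ k * x ^ k) * Real.exp (-x ^ 2 / 2) := by
          exact mul_le_mul_of_nonneg_right this hEx
      _ = (Real.sqrt 2 ^ k * Real.sqrt 2 ^ k) / S * x ^ k * Real.exp (-x ^ 2 / 2) := by ring
      _ = (2 : ℝ) ^ k / S * x ^ k * Real.exp (-x ^ 2 / 2) := by rw [h2k]
  refine hstep.trans (le_of_eq ?_)
  have hS_eq : S = (2 : ℝ) ^ ((k : ℝ) / 2) * Real.sqrt (Nat.factorial k)
      * Real.pi ^ ((1 : ℝ) / 4) := by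
    rw [hS_def, Real.sqrt_mul (by positivity), Real.sqrt_mul (by positivity)]
    congr 1
    · congr 1
      rw [Real.sqrt_eq_rpow, ← Real.rpow_natCast (2:ℝ) k, ← Real.rpow_mul (by norm_num)]
      congr 1
      ring
    · rw [Real.sqrt_eq_rpow, Real.sqrt_eq_rpow, ← Real.rpow_mul Real.pi_pos.le]
      norm_num
  have h2half : (2 : ℝ) ^ k = (2:ℝ) ^ ((k : ℝ) / 2) * (2:ℝ) ^ ((k : ℝ) / 2) := by
    rw [← Real.rpow_add (by norm_num : (0:ℝ) < 2), ← Real.rpow_natCast (2:ℝ) k]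
    congr 1
    ring
  rw [hS_eq, h2half]
  have hpos1 : (0:ℝ) < (2:ℝ) ^ ((k : ℝ) / 2) := Real.rpow_pos_of_pos (by norm_num) _
  have hpos2 : (0:ℝ) < Real.sqrt (Nat.factorial k) :=
    Real.sqrt_pos.2 (by exact_mod_cast Nat.factorial_pos k)
  have hpos3 : (0:ℝ) < Real.pi ^ ((1:ℝ)/4) := Real.rpow_pos_of_pos Real.pi_pos _
  field_simp

/-- **Pointwise bound for Hermite functions beyond the largest root.** For every `k ∈ ℕ`
and every `x ∈ ℝ` with `|x| ≥ √(2k+1)`, one has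
`|φ_k(x)| ≤ (2^{k/2} / (√(k!) π^{1/4})) |x|^k e^{-x²/2}`. -/
theorem hermite_fn_pointwise_bound (k : ℕ) (x : ℝ) (hx : Real.sqrt (2 * k + 1) ≤ |x|) :
    |hermiteFn k x| ≤
      (2 : ℝ) ^ ((k : ℝ) / 2) / (Real.sqrt (Nat.factorial k) * Real.pi ^ ((1 : ℝ) / 4)) *
        |x| ^ k * Real.exp (-x ^ 2 / 2) := by
  rcases le_total 0 x with hx0 | hx0
  · rw [abs_of_nonneg hx0] at hx ⊢
    exact hermiteFn_bound_nonneg k x hx0 hx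
  · rw [abs_of_nonpos hx0] at hx ⊢
    have hfeven : (fun y : ℝ => Real.exp (-((-y) ^ 2))) = fun y : ℝ => Real.exp (-(y ^ 2)) := by
      funext y; rw [neg_sq]
    have hD : iteratedDeriv k (fun y => Real.exp (-(y ^ 2))) x
        = (-1 : ℝ) ^ k • iteratedDeriv k (fun y => Real.exp (-(y ^ 2))) (-x) := by
      conv_lhs => rw [← hfeven]
      exact iteratedDeriv_comp_neg k (fun y => Real.exp (-(y ^ 2))) x
    have habs : |hermiteFn k x| = |hermiteFn k (-x)| := by
      unfold hermiteFn
      rw [hD, neg_sq, smul_eq_mul]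
      simp [abs_mul, abs_div, abs_pow, abs_neg]
    have hbound := hermiteFn_bound_nonneg k (-x) (by linarith) hx
    rw [neg_sq] at hbound
    rw [habs]
    exact hbound
end
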